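/- Let (G_ω, v) be an increasing weighted tree and let S be an independent set of G. If T is a connected component of G_S, then |V(T) ∩ N_G(S)| ≤ 1; moreover, if V(T) ∩ N_G(S) = {u}, then (T_ω, u) is an increasing weighted tree (with weight function the restriction of ω). -/

import Mathlib

open SimpleGraph

noncomputable section

variable {V : Type*}

/-- `p 0, p 1, …, p k` is a simple path in `G`: the vertices are pairwise distinct and
consecutive vertices are adjacent. -/
def IsSimplePathOn (G : SimpleGraph V) (p : ℕ → V) (k : ℕ) : Prop :=
  (∀ i ≤ k, ∀ j ≤ k, p i = p j → i = j) ∧ ∀ i < k, G.Adj (p i) (p (i + 1))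

/-- The path `p 0, …, p k` is increasing for the weight `ω`. -/
def IsIncreasingPath (ω : V → V → ℕ) (p : ℕ → V) (k : ℕ) : Prop :=
  ∀ i, i + 2 ≤ k → ω (p i) (p (i + 1)) ≤ ω (p (i + 1)) (p (i + 2))

/-- A leaf is a vertex of degree one. -/
def IsLeafVertex (G : SimpleGraph V) (x : V) : Prop := ∃! y, G.Adj x y

/-- `(G_ω, v)` is an increasing weighted tree with root `v`: `G` is a tree and every
simple path from a leaf to `v` is increasing. -/
def IsIncreasingWeightedTree (G : SimpleGraph V) (ω : V → V → ℕ) (v : V) : Prop :=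
  G.IsTree ∧ ∀ (p : ℕ → V) (k : ℕ), IsSimplePathOn G p k → IsLeafVertex G (p 0) → p k = v →
    IsIncreasingPath ω p k

/-- `S` is an independent set of `G`. -/
def IsIndepSetOn (G : SimpleGraph V) (S : Set V) : Prop :=
  ∀ a ∈ S, ∀ b ∈ S, ¬ G.Adj a b

/-- `N_G(S)`, the neighbourhood of the set `S`. -/
def setNbhd (G : SimpleGraph V) (S : Set V) : Set V :=
  {u | u ∉ S ∧ ∃ z ∈ S, G.Adj u z}

/-- `ν_S(u) = min { ω(uz) ∣ z ∈ S ∩ N_G(u) }`. -/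
def nuWt (G : SimpleGraph V) (ω : V → V → ℕ) (S : Set V) (u : V) : ℕ :=
  sInf {w | ∃ z ∈ S, G.Adj u z ∧ w = ω u z}

/-- The graph `G_S`: its vertices are those outside `S`, its edges are those of `G ∖ S`
except that every edge `uz` with `u ∈ N_G(S)` and `ω(uz) ≥ ν_S(u)` is removed. -/
def GSgraph (G : SimpleGraph V) (ω : V → V → ℕ) (S : Set V) : SimpleGraph V where
  Adj a b := G.Adj a b ∧ a ∉ S ∧ b ∉ S ∧
    (a ∈ setNbhd G S → ω a b < nuWt G ω S a) ∧
    (b ∈ setNbhd G S → ω b a < nuWt G ω S b)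
  symm := by
    constructor
    rintro a b ⟨h1, h2, h3, h4, h5⟩
    exact ⟨h1.symm, h3, h2, h5, h4⟩
  loopless := by
    constructor
    rintro a ⟨h, -⟩
    exact G.irrefl h

/-!
Orient the tree away from the root `v`. Being increasing means that at every vertex other than
`v` the edge to the parent is at least as heavy as every edge to a child. So an edge of `G_S`
at `u ∈ N_G(S)`, being lighter than some edge from `u` into `S`, leads to a child of `u`. In a
tree, a simple path that once steps away from the root keeps doing so; hence a simple path of
`G_S` ending in `N_G(S)` never takes such a step. A path joining two vertices of `N_G(S)`
would start with one. A weight decrease `ω(p₀p₁) > ω(p₁p₂)` along a simple path forces the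
step `p₁p₂` away from the root, so every simple path of `T` ending at `u` is increasing.
-/

namespace SimpleGraph.IsTree

variable {G : SimpleGraph V} {v x y y₁ y₂ w : V}

lemma exists_adj_dist_eq_add_one (hT : G.IsTree) (hx : x ≠ v) :
    ∃ y, G.Adj x y ∧ G.dist v x = G.dist v y + 1 := by
  obtain ⟨P, hP⟩ := hT.connected.exists_walk_length_eq_dist x v
  cases P with
  | nil => exact absurd rfl hx
  | cons hxy Q =>
    refine ⟨_, hxy, ?_⟩
    have hQ := dist_le Q
    rw [Walk.length_cons] at hP
    rw [dist_comm] at hP hQ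
    rcases hT.dist_eq_dist_add_one_of_adj v hxy with h | h <;> omega

lemma mem_support_of_adj_of_dist_eq_add_one (hT : G.IsTree) {p : G.Walk v x} (hp : p.IsPath)
    (hxy : G.Adj x y) (hd : G.dist v x = G.dist v y + 1) : y ∈ p.support := by
  obtain ⟨q, hq⟩ := hT.connected.exists_walk_length_eq_dist v y
  have hqx : (q.concat hxy.symm).IsPath :=
    Walk.isPath_of_length_eq_dist _ (by rw [Walk.length_concat, hq, hd])
  rw [(hT.existsUnique_path v x).unique hp hqx, Walk.support_concat]
  simp

lemma eq_of_adj_of_dist_eq_add_one (hT : G.IsTree) (h₁ : G.Adj x y₁) (h₂ : G.Adj x y₂)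
    (hd₁ : G.dist v x = G.dist v y₁ + 1) (hd₂ : G.dist v x = G.dist v y₂ + 1) :
    y₁ = y₂ := by
  obtain ⟨p, hp, -⟩ := hT.connected.exists_path_of_dist v x
  have hy₁ := hT.mem_support_of_adj_of_dist_eq_add_one hp h₁ hd₁
  have hy₂ := hT.mem_support_of_adj_of_dist_eq_add_one hp h₂ hd₂
  rw [hT.isAcyclic.eq_penultimate_of_adj_end hp h₁ hy₁,
    hT.isAcyclic.eq_penultimate_of_adj_end hp h₂ hy₂]

lemma exists_isLeafVertex_walk [Finite V] (hT : G.IsTree) (hw : w ≠ v) :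
    ∃ ℓ, IsLeafVertex G ℓ ∧ ∃ q : G.Walk ℓ w, G.dist v ℓ = G.dist v w + q.length := by
  obtain ⟨ℓ, ⟨q, hq⟩, hmax⟩ := Set.exists_max_image
    {ℓ | ∃ q : G.Walk ℓ w, G.dist v ℓ = G.dist v w + q.length} (G.dist v) (Set.toFinite _)
    ⟨w, Walk.nil, rfl⟩
  refine ⟨ℓ, ?_, q, hq⟩
  have hℓ : ℓ ≠ v := by
    rintro rfl
    have := hT.connected.pos_dist_of_ne hw.symm
    simp at hq
    omega
  obtain ⟨y, hℓy, hdy⟩ := hT.exists_adj_dist_eq_add_one hℓ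
  refine ⟨y, hℓy, fun c hℓc => by_contra fun hcy => ?_⟩
  have hdc : G.dist v c = G.dist v ℓ + 1 := by
    rcases hT.dist_eq_dist_add_one_of_adj v hℓc with h | h
    · exact absurd (hT.eq_of_adj_of_dist_eq_add_one hℓc hℓy h hdy) hcy
    · exact h
  have := hmax c ⟨Walk.cons hℓc.symm q, by rw [Walk.length_cons, hdc, hq]; ring⟩
  omega

end SimpleGraph.IsTree

lemma SimpleGraph.Walk.IsPath.isSimplePathOn {G : SimpleGraph V} {a b : V} {p : G.Walk a b}
    (hp : p.IsPath) : IsSimplePathOn G p.getVert p.length :=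
  ⟨fun _ hi _ hj h => hp.getVert_injOn hi hj h, fun _ hi => p.adj_getVert_succ hi⟩

namespace IsIncreasingWeightedTree

variable {G : SimpleGraph V} {ω : V → V → ℕ} {v w x y : V}

theorem weight_le_of_dist_eq_add_one [Finite V] (hG : IsIncreasingWeightedTree G ω v)
    (hwx : G.Adj w x) (hw : G.dist v w = G.dist v x + 1)
    (hxy : G.Adj x y) (hx : G.dist v x = G.dist v y + 1) : ω w x ≤ ω x y := by
  have hwv : w ≠ v := by
    rintro rfl
    simp at hw
  obtain ⟨ℓ, hℓ, q, hq⟩ := hG.1.exists_isLeafVertex_walk hwv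
  obtain ⟨r, hr⟩ := hG.1.connected.exists_walk_length_eq_dist y v
  set p := q.append (.cons hwx (.cons hxy r))
  have hp : p.length = G.dist ℓ v := by
    rw [dist_comm, hq, hw, hx, dist_comm, ← hr]
    simp only [p, Walk.length_append, Walk.length_cons]
    ring
  have key := hG.2 p.getVert p.length (p.isPath_of_length_eq_dist hp).isSimplePathOn
    (by simpa using hℓ) p.getVert_length q.length (by simp [p])
  simpa [p, Walk.getVert_append] using key

end IsIncreasingWeightedTree

namespace IsSimplePathOn

variable {G H : SimpleGraph V} {p : ℕ → V} {k : ℕ} {v : V}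

lemma mono (hGH : G ≤ H) (hp : IsSimplePathOn G p k) : IsSimplePathOn H p k :=
  ⟨hp.1, fun i hi => hGH (hp.2 i hi)⟩

lemma of_induce {s : Set V} {p : ℕ → s} (hp : IsSimplePathOn (G.induce s) p k) :
    IsSimplePathOn G (fun i => p i) k :=
  ⟨fun i hi j hj h => hp.1 i hi j hj (Subtype.ext h), hp.2⟩

/-- In a tree, once a simple path moves away from the root it keeps doing so: stepping back
towards the root would revisit the parent it came from. -/
lemma dist_succ_of_dist_succ (hT : G.IsTree) (hp : IsSimplePathOn G p k) {i : ℕ}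
    (hi : i + 2 ≤ k) (h : G.dist v (p (i + 1)) = G.dist v (p i) + 1) :
    G.dist v (p (i + 2)) = G.dist v (p (i + 1)) + 1 := by
  have hadj := hp.2 (i + 1) (by omega)
  rcases hT.dist_eq_dist_add_one_of_adj v hadj with h' | h'
  · have := hT.eq_of_adj_of_dist_eq_add_one hadj (hp.2 i (by omega)).symm h' h
    exact absurd (hp.1 _ hi _ (by omega) this) (by omega)
  · exact h'

lemma dist_succ_of_dist_succ_of_le (hT : G.IsTree) (hp : IsSimplePathOn G p k) {j : ℕ}
    (h : G.dist v (p (j + 1)) = G.dist v (p j) + 1) {i : ℕ} (hji : j ≤ i) (hik : i < k) :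
    G.dist v (p (i + 1)) = G.dist v (p i) + 1 := by
  induction i, hji using Nat.le_induction with
  | base => exact h
  | succ i _ ih => exact hp.dist_succ_of_dist_succ hT (by omega) (ih (by omega))

lemma dist_succ_of_weight_lt [Finite V] {ω : V → V → ℕ}
    (hG : IsIncreasingWeightedTree G ω v) (hp : IsSimplePathOn G p k) {i : ℕ} (hi : i + 2 ≤ k)
    (hlt : ω (p (i + 1)) (p (i + 2)) < ω (p i) (p (i + 1))) :
    G.dist v (p (i + 2)) = G.dist v (p (i + 1)) + 1 := by
  rcases hG.1.dist_eq_dist_add_one_of_adj v (hp.2 i (by omega)) with h | h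
  · rcases hG.1.dist_eq_dist_add_one_of_adj v (hp.2 (i + 1) (by omega)) with h' | h'
    · exact absurd (hG.weight_le_of_dist_eq_add_one (hp.2 i (by omega)) h
        (hp.2 (i + 1) (by omega)) h') (not_le.mpr hlt)
    · exact h'
  · exact hp.dist_succ_of_dist_succ hG.1 hi h

end IsSimplePathOn

section GSgraph

variable {G : SimpleGraph V} {ω : V → V → ℕ} {S : Set V} {v u w : V}

lemma GSgraph_le : GSgraph G ω S ≤ G := fun _ _ h => h.1

lemma exists_nuWt_eq (hu : u ∈ setNbhd G S) :
    ∃ z ∈ S, G.Adj u z ∧ nuWt G ω S u = ω u z := by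
  obtain ⟨-, z, hz, hadj⟩ := hu
  exact Nat.sInf_mem (s := {w | ∃ z ∈ S, G.Adj u z ∧ w = ω u z})
    ⟨ω u z, z, hz, hadj, rfl⟩

/-- An edge of `G_S` at `u ∈ N_G(S)` leads away from the root: the edge from `u` towards the
root outweighs every other edge at `u`, in particular the lightest edge into `S`. -/
lemma dist_succ_of_GSgraph_adj [Finite V] (hG : IsIncreasingWeightedTree G ω v)
    (hsym : ∀ a b, ω a b = ω b a) (hu : u ∈ setNbhd G S) (huw : (GSgraph G ω S).Adj u w) :
    G.dist v w = G.dist v u + 1 := by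
  obtain ⟨hadj, -, hwS, hlt, -⟩ := huw
  obtain ⟨z, hzS, hzu, hz⟩ := exists_nuWt_eq (ω := ω) hu
  rcases hG.1.dist_eq_dist_add_one_of_adj v hadj with hd | hd
  · have hzw : z ≠ w := fun h => hwS (h ▸ hzS)
    have hdz : G.dist v z = G.dist v u + 1 := by
      rcases hG.1.dist_eq_dist_add_one_of_adj v hzu with h | h
      · exact absurd (hG.1.eq_of_adj_of_dist_eq_add_one hzu hadj h hd) hzw
      · exact h
    have hle := hG.weight_le_of_dist_eq_add_one hzu.symm hdz hadj hd
    have := hlt hu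
    rw [hsym z u, ← hz] at hle
    omega
  · exact hd

lemma IsSimplePathOn.not_dist_succ_of_mem_setNbhd [Finite V]
    (hG : IsIncreasingWeightedTree G ω v) (hsym : ∀ a b, ω a b = ω b a)
    {p : ℕ → V} {k : ℕ} (hp : IsSimplePathOn (GSgraph G ω S) p k) (hpk : p k ∈ setNbhd G S)
    {j : ℕ} (hjk : j < k) :
    G.dist v (p (j + 1)) ≠ G.dist v (p j) + 1 := by
  intro h
  obtain ⟨m, rfl⟩ : ∃ m, k = m + 1 := ⟨k - 1, by omega⟩
  have hdown := (hp.mono GSgraph_le).dist_succ_of_dist_succ_of_le hG.1 h (i := m) (by omega)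
    (by omega)
  have hup := dist_succ_of_GSgraph_adj hG hsym hpk (hp.2 m (by omega)).symm
  omega

lemma IsSimplePathOn.isIncreasingPath_of_mem_setNbhd [Finite V]
    (hG : IsIncreasingWeightedTree G ω v) (hsym : ∀ a b, ω a b = ω b a)
    {p : ℕ → V} {k : ℕ} (hp : IsSimplePathOn (GSgraph G ω S) p k)
    (hpk : p k ∈ setNbhd G S) :
    IsIncreasingPath ω p k := fun i hi =>
  not_lt.mp fun hlt => hp.not_dist_succ_of_mem_setNbhd hG hsym hpk (j := i + 1) (by omega)
    ((hp.mono GSgraph_le).dist_succ_of_weight_lt hG hi hlt)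

lemma eq_of_GSgraph_reachable [Finite V] (hG : IsIncreasingWeightedTree G ω v)
    (hsym : ∀ a b, ω a b = ω b a) {a b : V} (hab : (GSgraph G ω S).Reachable a b)
    (ha : a ∈ setNbhd G S) (hb : b ∈ setNbhd G S) : a = b := by
  classical
  obtain ⟨P, hP⟩ := hab.some.toPath
  have hp := hP.isSimplePathOn
  by_contra hne
  have hlen : 0 < P.length := Nat.pos_of_ne_zero fun h0 => hne (Walk.eq_of_length_eq_zero h0)
  have hstep : (GSgraph G ω S).Adj a (P.getVert 1) := by simpa using hp.2 0 hlen
  exact hp.not_dist_succ_of_mem_setNbhd hG hsym (by simpa using hb) hlen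
    (by simpa using dist_succ_of_GSgraph_adj hG hsym ha hstep)

end GSgraph

theorem component_of_GS_increasing_general {V : Type*} [Fintype V]
    (G : SimpleGraph V) (ω : V → V → ℕ)
    (hsym : ∀ a b, ω a b = ω b a)
    (v : V) (hG : IsIncreasingWeightedTree G ω v)
    (S : Set V)
    (c : (GSgraph G ω S).ConnectedComponent) :
    (c.supp ∩ setNbhd G S).ncard ≤ 1 ∧
    ∀ (u : V) (hu : c.supp ∩ setNbhd G S = {u}),
      IsIncreasingWeightedTree ((GSgraph G ω S).induce c.supp)
        (fun a b => ω a.1 b.1)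
        ⟨u, (((Set.ext_iff.mp hu) u).mpr rfl).1⟩ := by
  refine ⟨Set.ncard_le_one_iff_subsingleton.mpr fun a ha b hb => ?_, fun u hu => ?_⟩
  · exact eq_of_GSgraph_reachable hG hsym (ConnectedComponent.exact (ha.1.trans hb.1.symm))
      ha.2 hb.2
  have huN : u ∈ setNbhd G S := (hu.symm.subset rfl).2
  refine ⟨⟨c.connected_toSimpleGraph, (hG.1.isAcyclic.anti GSgraph_le).induce _⟩, ?_⟩
  intro p k hp _ hpk
  exact hp.of_induce.isIncreasingPath_of_mem_setNbhd hG hsym (by rw [hpk]; exact huN)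

/-- Lemma 1.7(2): if `(G_ω, v)` is an increasing weighted tree and `S` is
an independent set of `G`, then every connected component `T` of `G_S` meets `N_G(S)` in at
most one vertex; moreover if `V(T) ∩ N_G(S) = {u}`, then `(T_ω, u)` is an increasing
weighted tree. -/
theorem component_of_GS_increasing {V : Type*} [Fintype V]
    (G : SimpleGraph V) (ω : V → V → ℕ)
    (hsym : ∀ a b, ω a b = ω b a) (hpos : ∀ a b, G.Adj a b → 0 < ω a b)
    (v : V) (hG : IsIncreasingWeightedTree G ω v)
    (S : Set V) (hS : IsIndepSetOn G S)
    (c : (GSgraph G ω S).ConnectedComponent) :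
    (c.supp ∩ setNbhd G S).ncard ≤ 1 ∧
    ∀ (u : V) (hu : c.supp ∩ setNbhd G S = {u}),
      IsIncreasingWeightedTree ((GSgraph G ω S).induce c.supp)
        (fun a b => ω a.1 b.1)
        ⟨u, (((Set.ext_iff.mp hu) u).mpr rfl).1⟩ :=
  component_of_GS_increasing_general G ω hsym v hG S c
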